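/- For every integer n ≥ 2, the von Mangoldt function satisfies Λ(n)/log n = Σ_{k=1}^{⌊log₂ n⌋} (1/k)(−1)^{k+1} f_k(n), where f_k(n) = f_k(n,2); equivalently Λ(n) = (log n) · Σ_{k=1}^{⌊log₂ n⌋} (1/k)(−1)^{k+1} f_k(n). -/

import Mathlib

/-!
Pointwise multiplication by `log` is a derivation `D` of the ring of arithmetic functions, and
`D ζ = log`. Put `A = ζ - 1`, so that `f_k(n) = A^k(n)`, and let
`L_K = ∑_{k=1}^{K} (-1)^(k+1) A^k / k` be the truncated series of `log ζ = log (1 + A)`. Then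
`D L_K = (∑_{j<K} (-A)^j) * log`, and since `(∑_{j<K} (-A)^j) * ζ = 1 - (-A)^K` and
`log = ζ * Λ`, this is `Λ - (-A)^K * Λ`. Both `A` and `Λ` vanish below `2`, so the error term
`(-A)^K * Λ` vanishes below `2^(K+1)`, which exceeds `n` for `K = ⌊log₂ n⌋`.
-/

open Finset

/-- `f k n l` is the number of ordered `k`-tuples `(i₁, …, i_k)` of integers
with each `i_j ≥ l` and `i₁ ⋯ i_k = n`.  (For `n ≥ 1` and `l ≥ 1` every such
factor lies in `[l, n]`, and for `k = 0` this gives `1` if `n = 1` and `0` otherwise.) -/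
def f (k n l : ℕ) : ℕ :=
  ((Fintype.piFinset fun _ : Fin k => Finset.Icc l n).filter
    fun v => ∏ i, v i = n).card

/-- `F k x l = ∑_{n ≤ x} f k n l`; it equals `0` for `x < 1` and `F 0 x l = 1` for `x ≥ 1`. -/
noncomputable def F (k : ℕ) (x : ℝ) (l : ℕ) : ℕ :=
  ∑ n ∈ Finset.Icc 1 ⌊x⌋₊, f k n l

open ArithmeticFunction
open scoped ArithmeticFunction.zeta

namespace ArithmeticFunction

theorem sum_apply {R ι : Type*} [AddCommMonoid R] (s : Finset ι)
    (g : ι → ArithmeticFunction R) (n : ℕ) : (∑ i ∈ s, g i) n = ∑ i ∈ s, g i n := by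
  induction s using Finset.cons_induction <;> simp [*]

theorem sub_apply {R : Type*} [AddGroup R] (f g : ArithmeticFunction R) (n : ℕ) :
    (f - g) n = f n - g n := by
  rw [sub_eq_add_neg, add_apply, neg_apply, sub_eq_add_neg]

theorem log_pmul_mul (f g : ArithmeticFunction ℝ) :
    log.pmul (f * g) = log.pmul f * g + f * log.pmul g := by
  ext n
  simp only [pmul_apply, log_apply, add_apply, mul_apply, Finset.mul_sum, ← Finset.sum_add_distrib]
  refine Finset.sum_congr rfl fun x hx => ?_
  obtain ⟨rfl, hn⟩ := Nat.mem_divisorsAntidiagonal.1 hx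
  obtain ⟨h1, h2⟩ := mul_ne_zero_iff.1 hn
  rw [Nat.cast_mul, Real.log_mul (by exact_mod_cast h1) (by exact_mod_cast h2)]
  ring

noncomputable def logDerivation : Derivation ℝ (ArithmeticFunction ℝ) (ArithmeticFunction ℝ) where
  toFun := log.pmul
  map_add' f g := by ext; simp [pmul_apply, mul_add]
  map_smul' c f := by ext; simp [pmul_apply, mul_left_comm]
  map_one_eq_zero' := by
    ext n
    rcases eq_or_ne n 1 with rfl | hn <;> simp [pmul_apply, one_apply_ne, *]
  leibniz' f g := by
    simp only [LinearMap.coe_mk, AddHom.coe_mk, smul_eq_mul, log_pmul_mul]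
    ring

theorem logDerivation_apply (f : ArithmeticFunction ℝ) (n : ℕ) :
    logDerivation f n = Real.log n * f n := rfl

theorem logDerivation_zeta : logDerivation (ζ : ArithmeticFunction ℝ) = log := by
  exact pmul_zeta log

theorem mul_apply_eq_zero_of_lt {R : Type*} [Semiring R] {f g : ArithmeticFunction R} {a b n : ℕ}
    (hf : ∀ m < a, f m = 0) (hg : ∀ m < b, g m = 0) (hn : n < a * b) : (f * g) n = 0 := by
  rw [mul_apply]
  refine Finset.sum_eq_zero fun x hx => ?_
  obtain ⟨rfl, -⟩ := Nat.mem_divisorsAntidiagonal.1 hx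
  rcases lt_or_ge x.1 a with h | h
  · rw [hf _ h, zero_mul]
  · rw [hg _ (lt_of_not_ge fun h' => hn.not_ge (Nat.mul_le_mul h h')), mul_zero]

theorem pow_apply_eq_zero_of_lt {R : Type*} [Semiring R] {f : ArithmeticFunction R} {a : ℕ}
    (hf : ∀ m < a, f m = 0) (k : ℕ) : ∀ m < a ^ k, (f ^ k) m = 0 := by
  induction k with
  | zero => intro m hm; simp [Nat.lt_one_iff.1 hm]
  | succ k ih => exact fun m hm => pow_succ f k ▸ mul_apply_eq_zero_of_lt ih hf (pow_succ a k ▸ hm)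

theorem zeta_sub_one_apply {R : Type*} [Ring R] (n : ℕ) :
    ((ζ : ArithmeticFunction R) - 1) n = if 2 ≤ n then 1 else 0 := by
  rcases n with _ | _ | n <;> simp [sub_apply, one_apply_ne]

end ArithmeticFunction

theorem f_eq_card_filter_finMulAntidiag {k n l : ℕ} (hl : 1 ≤ l) :
    f k n l = #{v ∈ Nat.finMulAntidiag k n | ∀ i, l ≤ v i} := by
  rw [f]
  congr 1
  ext v
  simp only [mem_filter, Fintype.mem_piFinset, mem_Icc, Nat.mem_finMulAntidiag]
  constructor
  · rintro ⟨hv, rfl⟩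
    exact ⟨⟨rfl, prod_ne_zero_iff.2 fun i _ => by have := (hv i).1; omega⟩, fun i => (hv i).1⟩
  · rintro ⟨⟨rfl, hn⟩, hv⟩
    exact ⟨fun i => ⟨hv i, Nat.le_of_dvd (Nat.pos_of_ne_zero hn) (dvd_prod_of_mem _ (mem_univ i))⟩,
      rfl⟩

theorem f_zero_left (n l : ℕ) : f 0 n l = if n = 1 then 1 else 0 := by
  rcases eq_or_ne n 1 with rfl | hn <;> simp [f, Finset.filter_true_of_mem, Ne.symm, *]

theorem f_succ_left {k n l : ℕ} (hl : 1 ≤ l) :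
    f (k + 1) n l = ∑ x ∈ n.divisorsAntidiagonal with l ≤ x.1, f k x.2 l := by
  simp only [f_eq_card_filter_finMulAntidiag hl]
  rw [← card_sigma]
  refine card_bij' (fun v _ => ⟨(v 0, ∏ i, Fin.tail v i), Fin.tail v⟩)
    (fun x _ => Fin.cons x.1.1 x.2) ?_ ?_ (fun v _ => Fin.cons_self_tail v) ?_
  all_goals simp only [mem_sigma, mem_filter, Nat.mem_finMulAntidiag, Nat.mem_divisorsAntidiagonal,
    Fin.prod_univ_succ, Fin.forall_fin_succ]
  · rintro v ⟨⟨hprod, hn⟩, hv0, hv⟩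
    exact ⟨⟨⟨hprod, hn⟩, hv0⟩, ⟨trivial, right_ne_zero_of_mul (hprod ▸ hn)⟩, hv⟩
  · rintro x ⟨⟨⟨hprod, hn⟩, hx⟩, ⟨hu, -⟩, hux⟩
    simp only [Fin.cons_zero, Fin.cons_succ, hu, hprod]
    exact ⟨⟨trivial, hn⟩, hx, hux⟩
  · rintro x ⟨-, ⟨hu, -⟩, -⟩
    simp only [Fin.cons_zero, Fin.tail_cons, hu]

theorem pow_zeta_sub_one_apply (k n : ℕ) : (((ζ : ArithmeticFunction ℝ) - 1) ^ k) n = f k n 2 := by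
  induction k generalizing n with
  | zero => simp [one_apply, f_zero_left]
  | succ k ih =>
    rw [pow_succ', mul_apply, f_succ_left one_le_two, Nat.cast_sum, sum_filter]
    refine sum_congr rfl fun x _ => ?_
    rw [zeta_sub_one_apply, ih]
    split_ifs <;> simp

noncomputable def logZetaPartialSum (K : ℕ) : ArithmeticFunction ℝ :=
  ∑ k ∈ Icc 1 K, ((1 / k : ℝ) * (-1) ^ (k + 1)) • ((ζ : ArithmeticFunction ℝ) - 1) ^ k

theorem logZetaPartialSum_apply (K n : ℕ) :
    logZetaPartialSum K n = ∑ k ∈ Icc 1 K, 1 / (k : ℝ) * (-1) ^ (k + 1) * f k n 2 := by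
  simp [logZetaPartialSum, ArithmeticFunction.sum_apply, pow_zeta_sub_one_apply]

theorem logDerivation_logZetaPartialSum (K : ℕ) :
    logDerivation (logZetaPartialSum K) = Λ - (-(ζ - 1)) ^ K * Λ := by
  set A : ArithmeticFunction ℝ := ζ - 1
  have hA : logDerivation A = log := by
    rw [map_sub, logDerivation_zeta, Derivation.map_one_eq_zero, sub_zero]
  have hgeom : (∑ j ∈ range K, (-A) ^ j) * ζ = 1 - (-A) ^ K := by
    simpa [A] using geom_sum_mul_neg (-A) K
  calc logDerivation (logZetaPartialSum K) = (∑ j ∈ range K, (-A) ^ j) * log := by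
        rw [logZetaPartialSum, map_sum, ← Ico_add_one_right_eq_Icc, sum_Ico_eq_sum_range,
          add_tsub_cancel_right, sum_mul]
        refine sum_congr rfl fun j _ => ?_
        rw [Derivation.map_smul, Derivation.leibniz_pow, hA, add_tsub_cancel_left,
          ← neg_one_smul ℝ A, smul_pow, smul_eq_mul, smul_mul_assoc, ← Nat.cast_smul_eq_nsmul ℝ,
          smul_smul]
        congr 1
        push_cast
        field_simp
        ring
    _ = (∑ j ∈ range K, (-A) ^ j) * ζ * Λ := by rw [← vonMangoldt_mul_zeta]; ring
    _ = Λ - (-A) ^ K * Λ := by rw [hgeom, sub_mul, one_mul]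

theorem neg_zeta_sub_one_pow_mul_vonMangoldt_apply_eq_zero {K n : ℕ} (hn : n < 2 ^ (K + 1)) :
    ((-((ζ : ArithmeticFunction ℝ) - 1)) ^ K * Λ) n = 0 := by
  have hA : ∀ m < 2, (-((ζ : ArithmeticFunction ℝ) - 1)) m = 0 := fun m hm => by
    rw [ArithmeticFunction.neg_apply, zeta_sub_one_apply, if_neg (by omega), neg_zero]
  have hΛ : ∀ m < 2, Λ m = 0 := fun m hm => by
    interval_cases m <;> simp
  exact mul_apply_eq_zero_of_lt (pow_apply_eq_zero_of_lt hA K) hΛ (pow_succ 2 K ▸ hn)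

theorem stmt9_general (n : ℕ) :
    ArithmeticFunction.vonMangoldt n =
      Real.log n *
        ∑ k ∈ Finset.Icc 1 (Nat.log 2 n),
          (1 / (k : ℝ)) * (-1 : ℝ) ^ (k + 1) * (f k n 2 : ℝ) := by
  have h := congrArg (· n) (logDerivation_logZetaPartialSum (Nat.log 2 n))
  simp only [logDerivation_apply, logZetaPartialSum_apply, ArithmeticFunction.sub_apply,
    neg_zeta_sub_one_pow_mul_vonMangoldt_apply_eq_zero (Nat.lt_pow_succ_log_self one_lt_two n),
    sub_zero] at h
  exact h.symm

theorem stmt9 (n : ℕ) (hn : 2 ≤ n) :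
    ArithmeticFunction.vonMangoldt n =
      Real.log n *
        ∑ k ∈ Finset.Icc 1 (Nat.log 2 n),
          (1 / (k : ℝ)) * (-1 : ℝ) ^ (k + 1) * (f k n 2 : ℝ) :=
  stmt9_general n
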